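/- Let F/F₀ be an unramified quadratic extension of p-adic fields with uniformizer ϖ. Let 𝕍 be a nondegenerate Hermitian space, E ⊂ 𝕍 a totally isotropic subspace, ℰ ⊂ E a full-rank O_F-lattice in E, and define Vert_ℰ = {vertex lattices Λ : ℰ ⊆ Λ} and Vert_ℰ^† = {Λ ∈ Vert_ℰ : ℰ = E ∩ Λ}. Then the map Λ ↦ Λ♭ := (E^⊥ ∩ Λ)/(E ∩ Λ) sends Vert_ℰ^† to vertex lattices in 𝕍♭ = E^⊥/E, and for Λ ∈ Vert_ℰ^† one has t(Λ♭) ≤ t(Λ). -/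

import Mathlib

/-!
Everything rests on a lifting property: if `x ∈ E^⊥` pairs integrally with `E^⊥ ∩ Λ`, then
`x - e ∈ Λ^∨` for some `e ∈ E`. Lift an `O`-basis of the (free) image of `Λ` in `V/E^⊥` to
`cᵢ ∈ Λ`, so that `Λ ⊆ (E^⊥ ∩ Λ) + Σ O cᵢ`. The images of the `cᵢ` are `F`-independent, and a
class of `V/E^⊥` orthogonal to all of `E` vanishes, so `e ↦ (φ(e, cᵢ))ᵢ` maps `E` onto `Fⁿ`; pick
`e` with `φ(e, cᵢ) = φ(x, cᵢ)`. Then `ϖ Λ^∨ ⊆ Λ` gives (b). For (c), the lifting property makes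
`(Λ♭)^∨/Λ♭` a quotient of `(Λ^∨ ∩ E^⊥)/(Λ ∩ E^⊥)`, a subspace of the `O/ϖ`-vector space
`Λ^∨/Λ`, and a quotient of a subspace of a vector space embeds into it.
-/

section

variable {O F V : Type*} [CommRing O] [Field F] [Algebra O F]
  [AddCommGroup V] [Module F V] [Module O V] [IsScalarTower O F V]

/-- The dual lattice `N^∨ = {x ∈ V | φ(x, N) ⊆ O}`. -/
def dualLat (σ : F ≃+* F) (φ : V →ₗ[F] V →ₛₗ[(σ : F →+* F)] F)
    (N : Submodule O V) : Submodule O V where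
  carrier := {x | ∀ y ∈ N, φ x y ∈ (algebraMap O F).range}
  add_mem' := by
    intro a b ha hb y hy
    rw [map_add, LinearMap.add_apply]
    exact add_mem (ha y hy) (hb y hy)
  zero_mem' := by
    intro y hy
    simp only [map_zero, LinearMap.zero_apply]
    exact zero_mem _
  smul_mem' := by
    intro c x hx y hy
    have h : (c • x : V) = (algebraMap O F c) • x := (algebraMap_smul F c x).symm
    rw [h, map_smul, LinearMap.smul_apply, smul_eq_mul]
    exact mul_mem ⟨c, rfl⟩ (hx y hy)

/-- The orthogonal complement `E^⊥ = {x ∈ V | φ(x, E) = 0}` of a subspace `E`. -/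
def orthogonalOf (σ : F ≃+* F) (φ : V →ₗ[F] V →ₛₗ[(σ : F →+* F)] F)
    (E : Submodule F V) : Submodule F V where
  carrier := {x | ∀ y ∈ E, φ x y = 0}
  add_mem' := by
    intro a b ha hb y hy
    rw [map_add, LinearMap.add_apply, ha y hy, hb y hy, add_zero]
  zero_mem' := by
    intro y hy
    simp only [map_zero, LinearMap.zero_apply]
  smul_mem' := by
    intro c x hx y hy
    rw [map_smul, LinearMap.smul_apply, hx y hy, smul_zero]

theorem Module.IsTorsionBySet.exists_rightInverse_of_surjective {R M B : Type*} [CommRing R]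
    [AddCommGroup M] [Module R M] [AddCommGroup B] [Module R B] {I : Ideal R} [I.IsMaximal]
    (hM : Module.IsTorsionBySet R M I) (π : M →ₗ[R] B) (hπ : Function.Surjective π) :
    ∃ s : B →ₗ[R] M, π ∘ₗ s = LinearMap.id := by
  have hB : Module.IsTorsionBySet R B I := by
    intro b r
    obtain ⟨m, rfl⟩ := hπ b
    rw [← map_smul, hM, map_zero]
  let := Ideal.Quotient.field I
  let := hM.module
  let := hB.module
  have := hM.isScalarTower (S := R)
  have := hB.isScalarTower (S := R)
  obtain ⟨s, hs⟩ := (π.extendScalarsOfSurjective (S := R ⧸ I)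
    Ideal.Quotient.mk_surjective).exists_rightInverse_of_surjective
    (LinearMap.range_eq_top.mpr hπ)
  exact ⟨s.restrictScalars R, congrArg (LinearMap.restrictScalars R) hs⟩

theorem exists_injective_of_surjective_of_ker_le {R M B C : Type*} [CommRing R]
    [AddCommGroup M] [Module R M] [AddCommGroup B] [Module R B] [AddCommGroup C] [Module R C]
    {I : Ideal R} [I.IsMaximal] (hC : Module.IsTorsionBySet R C I)
    (g : M →ₗ[R] C) (π : M →ₗ[R] B) (hπ : Function.Surjective π)
    (hker : LinearMap.ker g ≤ LinearMap.ker π) :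
    ∃ f : B →ₗ[R] C, Function.Injective f := by
  let gbar := (LinearMap.ker g).liftQ g le_rfl
  have hgbar : Function.Injective gbar :=
    LinearMap.ker_eq_bot.mp ((LinearMap.ker g).ker_liftQ_eq_bot g le_rfl le_rfl)
  have hS : Module.IsTorsionBySet R (M ⧸ LinearMap.ker g) I := fun x r =>
    hgbar (by rw [map_smul, hC, map_zero])
  obtain ⟨s, hs⟩ := hS.exists_rightInverse_of_surjective ((LinearMap.ker g).liftQ π hker)
    (by simpa [← LinearMap.range_eq_top, Submodule.range_liftQ] using hπ)
  exact ⟨gbar ∘ₗ s, hgbar.comp (Function.LeftInverse.injective (LinearMap.congr_fun hs))⟩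

theorem Submodule.exists_injective_quotient_of_forall_sub_mem {R W : Type*} [CommRing R]
    [AddCommGroup W] [Module R W] {ϖ : R} (hϖ : (Ideal.span {ϖ}).IsMaximal)
    {D L N S : Submodule R W} (hD : ∀ x ∈ D, ϖ • x ∈ L) (hLN : L ⊓ N ≤ S)
    (hN : ∀ x ∈ N, ∃ y ∈ D ⊓ N, x - y ∈ S) :
    ∃ f : (N ⧸ S.comap N.subtype) →ₗ[R] (D ⧸ L.comap D.subtype), Function.Injective f := by
  have htors : Module.IsTorsionBySet R (D ⧸ L.comap D.subtype) (Ideal.span {ϖ}) := by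
    refine (Module.isTorsionBySet_span_singleton_iff ϖ).mpr fun x => ?_
    obtain ⟨x, rfl⟩ := Quotient.mk_surjective _ x
    rw [← Quotient.mk_smul, Quotient.mk_eq_zero]
    exact hD _ x.2
  refine exists_injective_of_surjective_of_ker_le htors
    ((L.comap D.subtype).mkQ ∘ₗ inclusion inf_le_left)
    ((S.comap N.subtype).mkQ ∘ₗ inclusion inf_le_right) (fun q => ?_) fun m hm => ?_
  · obtain ⟨x, rfl⟩ := Quotient.mk_surjective _ q
    obtain ⟨y, hy, hxy⟩ := hN x x.2
    refine ⟨⟨y, hy⟩, ?_⟩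
    rw [LinearMap.comp_apply, mkQ_apply, Quotient.eq, mem_comap, ← neg_sub]
    exact S.neg_mem hxy
  · simp only [LinearMap.mem_ker, LinearMap.comp_apply, mkQ_apply, Quotient.mk_eq_zero] at hm ⊢
    exact hLN ⟨hm, m.2.2⟩

theorem Submodule.exists_linearIndependent_lift_of_fg [IsDomain O] [IsPrincipalIdealRing O]
    [IsFractionRing O F] (P : Submodule F V) {Λ : Submodule O V} (hΛ : Λ.FG) :
    ∃ (n : ℕ) (c : Fin n → V), (∀ i, c i ∈ Λ) ∧
      LinearIndependent F (P.mkQ ∘ c) ∧ ∀ l ∈ Λ, ∃ a : Fin n → O, l - ∑ i, a i • c i ∈ P := by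
  have : Module.IsTorsionFree O (V ⧸ P) := .trans_faithfulSMul O F _
  let q := P.mkQ.restrictScalars O
  let L := Λ.map q
  have : Module.Finite O L := Module.Finite.iff_fg.mpr (hΛ.map q)
  let b := Module.finBasis O L
  have hlift (i) : ∃ c ∈ Λ, q c = b i := Submodule.mem_map.mp (b i).2
  choose c hcΛ hqc using hlift
  refine ⟨_, c, hcΛ, ?_, fun l hl => ⟨b.repr ⟨q l, mem_map_of_mem hl⟩, ?_⟩⟩
  · rw [show P.mkQ ∘ c = L.subtype ∘ b from funext hqc, ← LinearIndependent.iff_fractionRing O F]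
    exact b.linearIndependent.map' _ L.ker_subtype
  · have hsum := congrArg L.subtype (b.sum_repr ⟨q l, mem_map_of_mem hl⟩)
    simp only [map_sum, map_smul, subtype_apply] at hsum
    rw [← Quotient.mk_eq_zero, ← mkQ_apply, ← LinearMap.restrictScalars_apply (R := O),
      map_sub, map_sum]
    change q l - ∑ i, (_ : O) • q (c i) = 0
    simp only [hqc, hsum, sub_self]

section Orthogonality

variable {σ : F ≃+* F} {φ : V →ₗ[F] V →ₛₗ[(σ : F →+* F)] F}


theorem mem_orthogonalOf_iff_right (hherm : ∀ x y : V, φ x y = σ (φ y x))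
    {E : Submodule F V} {x : V} : x ∈ orthogonalOf σ φ E ↔ ∀ y ∈ E, φ y x = 0 := by
  refine forall₂_congr fun y _ => ?_
  rw [hherm, map_eq_zero_iff σ σ.injective]

theorem exists_mem_apply_eq_of_linearIndependent (hσinv : ∀ x, σ (σ x) = x)
    (hherm : ∀ x y : V, φ x y = σ (φ y x)) {E : Submodule F V} {n : ℕ} {c : Fin n → V}
    (hc : LinearIndependent F ((orthogonalOf σ φ E).mkQ ∘ c)) (t : Fin n → F) :
    ∃ e ∈ E, ∀ i, φ e (c i) = t i := by
  let β := LinearMap.pi (fun i => φ.flip (c i)) ∘ₗ E.subtype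
  suffices Function.Surjective β from
    let ⟨e, he⟩ := this t; ⟨e, e.2, fun i => congrFun he i⟩
  rw [← LinearMap.dualMap_injective_iff, ← LinearMap.ker_eq_bot, Submodule.eq_bot_iff]
  intro ℓ hℓ
  let a i := ℓ fun j => if i = j then 1 else 0
  have hw : ∑ i, σ (a i) • c i ∈ orthogonalOf σ φ E := by
    rw [mem_orthogonalOf_iff_right hherm]
    intro y hy
    have h := LinearMap.congr_fun hℓ ⟨y, hy⟩
    rw [LinearMap.dualMap_apply, LinearMap.pi_apply_eq_sum_univ] at h
    simpa [β, map_sum, hσinv, mul_comm] using h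
  have ha (i) : a i = 0 := by
    rw [← hσinv (a i), Fintype.linearIndependent_iff.mp hc (fun i => σ (a i)) ?_ i, map_zero]
    have hw' := (Submodule.Quotient.mk_eq_zero _).mpr hw
    rw [← Submodule.mkQ_apply, map_sum] at hw'
    simpa using hw'
  refine LinearMap.ext fun x => ?_
  rw [LinearMap.pi_apply_eq_sum_univ ℓ x, LinearMap.zero_apply]
  exact Finset.sum_eq_zero fun i _ => smul_eq_zero_of_right _ (ha i)

theorem exists_sub_mem_dualLat_of_mem_orthogonalOf [IsDomain O] [IsPrincipalIdealRing O]
    [IsFractionRing O F] (hσinv : ∀ x, σ (σ x) = x) (hherm : ∀ x y : V, φ x y = σ (φ y x))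
    {E : Submodule F V} {Λ : Submodule O V} (hΛ : Λ.FG) {x : V}
    (hxΛ : x ∈ dualLat σ φ ((orthogonalOf σ φ E).restrictScalars O ⊓ Λ)) :
    ∃ e ∈ E, x - e ∈ dualLat σ φ Λ := by
  obtain ⟨n, c, hcΛ, hc, hdec⟩ := (orthogonalOf σ φ E).exists_linearIndependent_lift_of_fg hΛ
  obtain ⟨e, he, hec⟩ := exists_mem_apply_eq_of_linearIndependent hσinv hherm hc (φ x ∘ c)
  refine ⟨e, he, fun l hl => ?_⟩
  obtain ⟨a, ha⟩ := hdec l hl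
  set m := l - ∑ i, a i • c i
  have hmΛ : m ∈ Λ := sub_mem hl (sum_mem fun i _ => Λ.smul_mem _ (hcΛ i))
  have hspan : φ (x - e) (∑ i, a i • c i) = 0 := by
    simp [← algebraMap_smul F, hec]
  have hem : φ e m = 0 := (mem_orthogonalOf_iff_right hherm).mp ha e he
  have hl : φ (x - e) l = φ x m :=
    calc φ (x - e) l = φ (x - e) m + φ (x - e) (∑ i, a i • c i) := by
          rw [← map_add, sub_add_cancel]
      _ = φ x m := by rw [hspan, add_zero, map_sub φ x e, LinearMap.sub_apply, hem, sub_zero]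
  exact hl ▸ hxΛ m ⟨ha, hmΛ⟩

end Orthogonality

theorem stmt19_general [IsDomain O] [IsDiscreteValuationRing O] [IsFractionRing O F]
    (ϖ : O) (hϖ : Irreducible ϖ)
    (σ : F ≃+* F) (hσinv : ∀ x, σ (σ x) = x)
    (φ : V →ₗ[F] V →ₛₗ[(σ : F →+* F)] F)
    (hherm : ∀ x y : V, φ x y = σ (φ y x))
    (E : Submodule F V) (hiso : ∀ x ∈ E, ∀ y ∈ E, φ x y = 0)
    -- `Λ` a vertex lattice:
    (Λ : Submodule O V) (hfg : Λ.FG)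
    (hint : Λ ≤ dualLat σ φ Λ) (hvert : ∀ x ∈ dualLat σ φ Λ, ϖ • x ∈ Λ) :
    -- (a) `Λ♭ ⊆ (Λ♭)^∨` : the form is integral on `N₁ = E^⊥ ∩ Λ`
    (∀ x ∈ (orthogonalOf σ φ E).restrictScalars O ⊓ Λ,
      ∀ y ∈ (orthogonalOf σ φ E).restrictScalars O ⊓ Λ,
        φ x y ∈ (algebraMap O F).range) ∧
    -- (b) `(Λ♭)^∨ ⊆ ϖ⁻¹Λ♭` : if `x ∈ E^⊥` pairs integrally with `N₁` then
    --     `ϖ • x ∈ N₁ + E`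
    (∀ x ∈ orthogonalOf σ φ E,
      (∀ y ∈ (orthogonalOf σ φ E).restrictScalars O ⊓ Λ,
        φ x y ∈ (algebraMap O F).range) →
      ϖ • x ∈ ((orthogonalOf σ φ E).restrictScalars O ⊓ Λ) ⊔ E.restrictScalars O) ∧
    -- (c) `t(Λ♭) ≤ t(Λ)` : an injective `O`-linear map `(Λ♭)^∨/Λ♭ ↪ Λ^∨/Λ`
    (∃ f : (↥(dualLat σ φ ((orthogonalOf σ φ E).restrictScalars O ⊓ Λ) ⊓
              (orthogonalOf σ φ E).restrictScalars O) ⧸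
            ((((orthogonalOf σ φ E).restrictScalars O ⊓ Λ) ⊔ E.restrictScalars O).comap
              (dualLat σ φ ((orthogonalOf σ φ E).restrictScalars O ⊓ Λ) ⊓
                (orthogonalOf σ φ E).restrictScalars O).subtype)) →ₗ[O]
           (↥(dualLat σ φ Λ) ⧸ (Λ.comap (dualLat σ φ Λ).subtype)),
      Function.Injective f) := by
  set P := orthogonalOf σ φ E
  set N₁ := P.restrictScalars O ⊓ Λ
  have hEP : E ≤ P := fun e he y hy => hiso e he y hy
  have hlift : ∀ x ∈ dualLat σ φ N₁, ∃ e ∈ E, x - e ∈ dualLat σ φ Λ := fun x hx =>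
    exists_sub_mem_dualLat_of_mem_orthogonalOf hσinv hherm hfg hx
  refine ⟨fun x hx y hy => hint hx.2 y hy.2, fun x hxP hx => ?_, ?_⟩
  · obtain ⟨e, he, hxe⟩ := hlift x hx
    rw [← sub_add_cancel x e, smul_add]
    have hxeP : x - e ∈ P.restrictScalars O := sub_mem hxP (hEP he)
    exact add_mem (Submodule.mem_sup_left ⟨(P.restrictScalars O).smul_mem ϖ hxeP, hvert _ hxe⟩)
      (Submodule.mem_sup_right ((E.restrictScalars O).smul_mem ϖ he))
  · refine Submodule.exists_injective_quotient_of_forall_sub_mem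
      (PrincipalIdealRing.isMaximal_of_irreducible hϖ) hvert ?_ fun x hx => ?_
    · rintro m ⟨hmΛ, -, hmP⟩
      exact Submodule.mem_sup_left ⟨hmP, hmΛ⟩
    · obtain ⟨e, he, hxe⟩ := hlift x hx.1
      refine ⟨x - e, ⟨hxe, fun y hy => hxe y hy.2, sub_mem hx.2 (hEP he)⟩, ?_⟩
      rw [sub_sub_cancel]
      exact Submodule.mem_sup_right he

/-- the map `Λ ↦ Λ♭` on `Vert_ℰ^†`, §5.5, eq. (eq:vert).
`F/F₀` unramified quadratic extension of `p`-adic fields, `(𝕍, φ)` a nondegenerate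
Hermitian space, `E ⊆ 𝕍` totally isotropic, `ℰ ⊂ E` a full-rank `O_F`-lattice in `E`,
and `Λ ∈ Vert_ℰ^†`, i.e. a vertex lattice with `ℰ = E ∩ Λ`.  Then
`Λ♭ = (E^⊥ ∩ Λ)/(E ∩ Λ)` is a vertex lattice in `𝕍♭ = E^⊥/E` (expressed via
representatives in `E^⊥`), and `t(Λ♭) ≤ t(Λ)`: there is an injective `O`-linear map
`(Λ♭)^∨/Λ♭ ↪ Λ^∨/Λ`, where `(Λ♭)^∨/Λ♭` is realized as
`N₂/((N₁ + E) ∩ N₂)` with `N₁ = E^⊥ ∩ Λ` and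
`N₂ = {x ∈ E^⊥ | φ(x, N₁) ⊆ O}`. -/
theorem stmt19 [IsDomain O] [IsDiscreteValuationRing O]
    [IsAdicComplete (IsLocalRing.maximalIdeal O) O] [IsFractionRing O F]
    (ϖ : O) (hϖ : Irreducible ϖ)
    (σ : F ≃+* F) (hσinv : ∀ x, σ (σ x) = x)
    (hσO : ∀ a : O, σ (algebraMap O F a) ∈ (algebraMap O F).range)
    [FiniteDimensional F V]
    (φ : V →ₗ[F] V →ₛₗ[(σ : F →+* F)] F)
    (hherm : ∀ x y : V, φ x y = σ (φ y x))
    (hnd : ∀ x : V, (∀ y : V, φ x y = 0) → x = 0)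
    (E : Submodule F V) (hiso : ∀ x ∈ E, ∀ y ∈ E, φ x y = 0)
    -- `ℰ ⊂ E` a full-rank lattice in `E`:
    (ℰ : Submodule O V) (hℰfg : ℰ.FG) (hℰfull : Submodule.span F (ℰ : Set V) = E)
    -- `Λ` a vertex lattice:
    (Λ : Submodule O V) (hfg : Λ.FG) (hfull : Submodule.span F (Λ : Set V) = ⊤)
    (hint : Λ ≤ dualLat σ φ Λ) (hvert : ∀ x ∈ dualLat σ φ Λ, ϖ • x ∈ Λ)
    -- `Λ ∈ Vert_ℰ^†`: `ℰ ⊆ Λ` and `ℰ = E ∩ Λ`: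
    (hℰΛ : ℰ ≤ Λ) (hsat : E.restrictScalars O ⊓ Λ = ℰ) :
    -- (a) `Λ♭ ⊆ (Λ♭)^∨` : the form is integral on `N₁ = E^⊥ ∩ Λ`
    (∀ x ∈ (orthogonalOf σ φ E).restrictScalars O ⊓ Λ,
      ∀ y ∈ (orthogonalOf σ φ E).restrictScalars O ⊓ Λ,
        φ x y ∈ (algebraMap O F).range) ∧
    -- (b) `(Λ♭)^∨ ⊆ ϖ⁻¹Λ♭` : if `x ∈ E^⊥` pairs integrally with `N₁` then
    --     `ϖ • x ∈ N₁ + E`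
    (∀ x ∈ orthogonalOf σ φ E,
      (∀ y ∈ (orthogonalOf σ φ E).restrictScalars O ⊓ Λ,
        φ x y ∈ (algebraMap O F).range) →
      ϖ • x ∈ ((orthogonalOf σ φ E).restrictScalars O ⊓ Λ) ⊔ E.restrictScalars O) ∧
    -- (c) `t(Λ♭) ≤ t(Λ)` : an injective `O`-linear map `(Λ♭)^∨/Λ♭ ↪ Λ^∨/Λ`
    (∃ f : (↥(dualLat σ φ ((orthogonalOf σ φ E).restrictScalars O ⊓ Λ) ⊓
              (orthogonalOf σ φ E).restrictScalars O) ⧸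
            ((((orthogonalOf σ φ E).restrictScalars O ⊓ Λ) ⊔ E.restrictScalars O).comap
              (dualLat σ φ ((orthogonalOf σ φ E).restrictScalars O ⊓ Λ) ⊓
                (orthogonalOf σ φ E).restrictScalars O).subtype)) →ₗ[O]
           (↥(dualLat σ φ Λ) ⧸ (Λ.comap (dualLat σ φ Λ).subtype)),
      Function.Injective f) :=
  stmt19_general ϖ hϖ σ hσinv φ hherm E hiso Λ hfg hint hvert

end
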